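/- Let f : ℝ^n → ℝ be differentiable and satisfy the local Regularity Condition RC(μ,λ,ε) with constants μ, λ, ε > 0 at a local minimizer x⋆ (so ⟨∇f(z), z − x⋆⟩ ≥ (μ/2)‖∇f(z)‖² + (λ/2)‖z − x⋆‖² for all z ∈ N_ε(x⋆) := {z : ‖z − x⋆‖ ≤ ε‖x⋆‖}, and ∇f(x⋆) = 0). Consider the general accelerated gradient method with parameters α > 0 and β₁, β₂ ∈ [0,1): y_k = (1 + β₂)z_k − β₂z_{k−1}, z_{k+1} = (1 + β₁)z_k − β₁z_{k−1} − α∇f(y_k), with system matrices A = [[1 + β₁, −β₁],[1, 0]], B = [−α; 0], C = [1 + β₂, −β₂], D = 0. Suppose there exist a symmetric positive definite P ∈ ℝ^{2×2} and ρ ∈ (0,1) such that [[AᵀPA − ρ²P, AᵀPB],[BᵀPA, BᵀPB]] + [[C, D],[0_{1×2}, 1]]ᵀ [[−λ, 1],[1, −μ]] [[C, D],[0_{1×2}, 1]] ⪯ 0. If z₋₁, z₀ ∈ N_{ε/√(10·cond(P))}(x⋆), then y_k ∈ N_ε(x⋆) for all k ≥ 0, where cond(P) is the ratio of the largest to the smallest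 eigenvalue of P. -/

import Mathlib

/-!
Write `V_k = ξ_kᵀ (P ⊗ I) ξ_k` with `ξ_k = (z_{k+1} - x⋆, z_k - x⋆)`. Evaluating the LMI on
`(ξ_k, ∇f(y_k))` gives `V_{k+1} ≤ ρ² V_k` plus a multiple of the RC slack at `y_k`, which is
nonpositive as long as `y_k ∈ N_ε(x⋆)`. Conversely, `λ_min(P) ‖ξ_k‖² ≤ V_k` and
`‖y_k - x⋆‖² ≤ 5 ‖ξ_k‖²` show that `y_k ∈ N_ε(x⋆)` as long as `V_k ≤ V_0`, while the choice of the
initial radius makes `V_0 ≤ λ_max(P) ‖ξ_0‖² ≤ λ_min(P) (ε ‖x⋆‖)² / 5`. An induction on `k` closes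
the loop.
-/

open Matrix InnerProductSpace
open scoped MatrixOrder

section KronQuadForm

variable {E : Type*} [NormedAddCommGroup E] [InnerProductSpace ℝ E] {ι : Type*} [Fintype ι]

/-- The quadratic form of `N ⊗ I` at `u ∈ E^ι`, as a linear function of `N`. -/
noncomputable def kronQuadForm (u : ι → E) : Matrix ι ι ℝ →ₗ[ℝ] ℝ where
  toFun N := ∑ i, ∑ j, N i j * ⟪u i, u j⟫_ℝ
  map_add' M N := by simp only [Matrix.add_apply, add_mul, Finset.sum_add_distrib]
  map_smul' c N := by
    simp only [Matrix.smul_apply, smul_eq_mul, mul_assoc, RingHom.id_apply, Finset.mul_sum]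

lemma kronQuadForm_apply (u : ι → E) (N : Matrix ι ι ℝ) :
    kronQuadForm u N = ∑ i, ∑ j, N i j * ⟪u i, u j⟫_ℝ := rfl

lemma kronQuadForm_vecMulVec (u : ι → E) (v : ι → ℝ) :
    kronQuadForm u (vecMulVec v v) = ‖∑ i, v i • u i‖ ^ 2 := by
  simp only [kronQuadForm_apply, vecMulVec_apply, ← real_inner_self_eq_norm_sq, sum_inner,
    inner_sum, real_inner_smul_left, real_inner_smul_right]
  exact Finset.sum_congr rfl fun i _ => Finset.sum_congr rfl fun j _ => by
    rw [real_inner_comm]; ring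

lemma kronQuadForm_nonneg {N : Matrix ι ι ℝ} (hN : N.PosSemidef) (u : ι → E) :
    0 ≤ kronQuadForm u N := by
  obtain ⟨m, v, rfl⟩ := posSemidef_iff_eq_sum_vecMulVec.mp hN
  simp only [map_sum, star_trivial, kronQuadForm_vecMulVec]
  positivity

lemma kronQuadForm_mono (u : ι → E) {M N : Matrix ι ι ℝ} (h : M ≤ N) :
    kronQuadForm u M ≤ kronQuadForm u N :=
  sub_nonneg.mp (map_sub (kronQuadForm u) N M ▸ kronQuadForm_nonneg h u)

lemma kronQuadForm_one [DecidableEq ι] (u : ι → E) :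
    kronQuadForm u 1 = ∑ i, ‖u i‖ ^ 2 := by
  simp [kronQuadForm_apply, one_apply]

lemma mul_sum_norm_sq_le_kronQuadForm [DecidableEq ι] (u : ι → E) {c : ℝ} {N : Matrix ι ι ℝ}
    (h : c • 1 ≤ N) : c * ∑ i, ‖u i‖ ^ 2 ≤ kronQuadForm u N := by
  simpa only [map_smul, kronQuadForm_one, smul_eq_mul] using kronQuadForm_mono u h

lemma kronQuadForm_le_mul_sum_norm_sq [DecidableEq ι] (u : ι → E) {c : ℝ} {N : Matrix ι ι ℝ}
    (h : N ≤ c • 1) : kronQuadForm u N ≤ c * ∑ i, ‖u i‖ ^ 2 := by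
  simpa only [map_smul, kronQuadForm_one, smul_eq_mul] using kronQuadForm_mono u h

end KronQuadForm

section Eigenvalues

variable {n : Type*} [Fintype n] [DecidableEq n] {A : Matrix n n ℝ}

lemma Matrix.IsHermitian.iInf_eigenvalues_smul_one_le (hA : A.IsHermitian) :
    (⨅ i, hA.eigenvalues i) • 1 ≤ A := by
  rw [← Algebra.algebraMap_eq_smul_one, algebraMap_le_iff_le_spectrum (a := A) hA,
    hA.spectrum_real_eq_range_eigenvalues]
  rintro _ ⟨i, rfl⟩
  exact ciInf_le (Set.finite_range _).bddBelow i

lemma Matrix.IsHermitian.le_iSup_eigenvalues_smul_one (hA : A.IsHermitian) :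
    A ≤ (⨆ i, hA.eigenvalues i) • 1 := by
  rw [← Algebra.algebraMap_eq_smul_one, le_algebraMap_iff_spectrum_le (a := A) hA,
    hA.spectrum_real_eq_range_eigenvalues]
  rintro _ ⟨i, rfl⟩
  exact le_ciSup (Set.finite_range _).bddAbove i

lemma Matrix.PosDef.iInf_eigenvalues_pos [Nonempty n] (hA : A.PosDef) :
    0 < ⨅ i, hA.1.eigenvalues i := by
  obtain ⟨i, hi⟩ := exists_eq_ciInf_of_finite (f := hA.1.eigenvalues)
  exact hi ▸ hA.eigenvalues_pos i

end Eigenvalues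

lemma le_apply_zero_of_guarded_step {α : Type*} [Preorder α] {V : ℕ → α} {p : ℕ → Prop}
    (hp : ∀ k, V k ≤ V 0 → p k) (hstep : ∀ k, p k → V (k + 1) ≤ V k) (k : ℕ) : V k ≤ V 0 := by
  induction k with
  | zero => exact le_rfl
  | succ k ih => exact (hstep k (hp k ih)).trans ih

section AGD

variable {E : Type*} [NormedAddCommGroup E] [InnerProductSpace ℝ E]

lemma norm_smul_sub_smul_sq_le (s t : ℝ) (a b : E) :
    ‖s • a - t • b‖ ^ 2 ≤ (s ^ 2 + t ^ 2) * (‖a‖ ^ 2 + ‖b‖ ^ 2) := by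
  have h : ‖s • a - t • b‖ ≤ |s| * ‖a‖ + |t| * ‖b‖ := by
    simpa only [norm_smul, Real.norm_eq_abs] using norm_sub_le (s • a) (t • b)
  calc ‖s • a - t • b‖ ^ 2 ≤ (|s| * ‖a‖ + |t| * ‖b‖) ^ 2 := by gcongr
    _ ≤ (s ^ 2 + t ^ 2) * (‖a‖ ^ 2 + ‖b‖ ^ 2) := by
      nlinarith [sq_nonneg (|s| * ‖b‖ - |t| * ‖a‖), sq_abs s, sq_abs t]

lemma norm_momentum_le_of_kronQuadForm_le {P : Matrix (Fin 2) (Fin 2) ℝ} {c R β : ℝ}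
    (hc : 0 < c) (hP : c • 1 ≤ P) (hR : 0 ≤ R) (hβ : β ∈ Set.Icc (0 : ℝ) 1) {a b : E}
    (hV : kronQuadForm ![a, b] P ≤ c * R ^ 2 / 5) : ‖(1 + β) • a - β • b‖ ≤ R := by
  have hlower : c * (‖a‖ ^ 2 + ‖b‖ ^ 2) ≤ kronQuadForm ![a, b] P := by
    simpa only [Fin.sum_univ_two, cons_val_zero, cons_val_one]
      using mul_sum_norm_sq_le_kronQuadForm ![a, b] hP
  have hξ : ‖a‖ ^ 2 + ‖b‖ ^ 2 ≤ R ^ 2 / 5 :=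
    le_of_mul_le_mul_left ((hlower.trans hV).trans_eq (mul_div_assoc _ _ _)) hc
  have hcoef : (1 + β) ^ 2 + β ^ 2 ≤ 5 := by nlinarith [hβ.1, hβ.2]
  refine (pow_le_pow_iff_left₀ (norm_nonneg _) hR two_ne_zero).mp ?_
  calc ‖(1 + β) • a - β • b‖ ^ 2 ≤ ((1 + β) ^ 2 + β ^ 2) * (‖a‖ ^ 2 + ‖b‖ ^ 2) :=
        norm_smul_sub_smul_sq_le _ _ a b
    _ ≤ 5 * (R ^ 2 / 5) := by gcongr
    _ = R ^ 2 := by ring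

lemma kronQuadForm_le_of_norm_le {P : Matrix (Fin 2) (Fin 2) ℝ} {cmin cmax ε r : ℝ}
    (hmin : 0 < cmin) (hmax : 0 < cmax) (hP : P ≤ cmax • 1) {a b : E}
    (ha : ‖a‖ ≤ ε / √(10 * (cmax / cmin)) * r) (hb : ‖b‖ ≤ ε / √(10 * (cmax / cmin)) * r) :
    kronQuadForm ![a, b] P ≤ cmin * (ε * r) ^ 2 / 5 := by
  set δ := ε / √(10 * (cmax / cmin)) * r
  have hδ : cmax * (2 * δ ^ 2) = cmin * (ε * r) ^ 2 / 5 := by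
    rw [mul_pow, div_pow, Real.sq_sqrt (by positivity)]
    field_simp
    ring
  have ha2 := pow_le_pow_left₀ (norm_nonneg a) ha 2
  have hb2 := pow_le_pow_left₀ (norm_nonneg b) hb 2
  calc kronQuadForm ![a, b] P ≤ cmax * (‖a‖ ^ 2 + ‖b‖ ^ 2) := by
        simpa only [Fin.sum_univ_two, cons_val_zero, cons_val_one]
          using kronQuadForm_le_mul_sum_norm_sq ![a, b] hP
    _ ≤ cmax * (2 * δ ^ 2) := by gcongr; linarith
    _ = cmin * (ε * r) ^ 2 / 5 := hδ

/-- Minus the matrix that the LMI requires to be `⪯ 0`. -/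
def agdLMI (μ lam α β₁ β₂ : ℝ) (P : Matrix (Fin 2) (Fin 2) ℝ) (ρ : ℝ) :
    Matrix (Fin 2 ⊕ Fin 1) (Fin 2 ⊕ Fin 1) ℝ :=
  -(fromBlocks
        ((!![1 + β₁, -β₁; 1, 0])ᵀ * P * !![1 + β₁, -β₁; 1, 0] - ρ ^ 2 • P)
        ((!![1 + β₁, -β₁; 1, 0])ᵀ * P * !![-α; 0])
        ((!![-α; 0])ᵀ * P * !![1 + β₁, -β₁; 1, 0])
        ((!![-α; 0])ᵀ * P * !![-α; 0]) +
      (fromBlocks !![1 + β₂, -β₂] (0 : Matrix (Fin 1) (Fin 1) ℝ) 0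
        (1 : Matrix (Fin 1) (Fin 1) ℝ))ᵀ *
      (fromBlocks (-lam • (1 : Matrix (Fin 1) (Fin 1) ℝ)) (1 : Matrix (Fin 1) (Fin 1) ℝ)
        (1 : Matrix (Fin 1) (Fin 1) ℝ) (-μ • (1 : Matrix (Fin 1) (Fin 1) ℝ))) *
      (fromBlocks !![1 + β₂, -β₂] (0 : Matrix (Fin 1) (Fin 1) ℝ) 0
        (1 : Matrix (Fin 1) (Fin 1) ℝ)))

lemma kronQuadForm_agdLMI (μ lam α β₁ β₂ : ℝ) (P : Matrix (Fin 2) (Fin 2) ℝ) (ρ : ℝ)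
    (a b g : E) :
    kronQuadForm (Sum.elim ![a, b] ![g]) (agdLMI μ lam α β₁ β₂ P ρ) =
      ρ ^ 2 * kronQuadForm ![a, b] P - kronQuadForm ![(1 + β₁) • a - β₁ • b - α • g, a] P +
        (μ * ‖g‖ ^ 2 + lam * ‖(1 + β₂) • a - β₂ • b‖ ^ 2 - 2 * ⟪g, (1 + β₂) • a - β₂ • b⟫_ℝ) := by
  simp only [agdLMI, kronQuadForm_apply, Fintype.sum_sum_type, Fin.sum_univ_two, Fin.sum_univ_one,
    Sum.elim_inl, Sum.elim_inr, Matrix.neg_apply, Matrix.add_apply, Matrix.sub_apply,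
    Matrix.smul_apply, fromBlocks_apply₁₁, fromBlocks_apply₁₂, fromBlocks_apply₂₁,
    fromBlocks_apply₂₂, Matrix.mul_apply, transpose_apply, Matrix.one_apply, Matrix.zero_apply,
    of_apply, cons_val_zero, cons_val_one, cons_val_fin_one, smul_eq_mul, inner_sub_left,
    inner_sub_right, real_inner_smul_left, real_inner_smul_right, ← real_inner_self_eq_norm_sq]
  simp only [real_inner_comm a b, real_inner_comm a g, real_inner_comm b g]
  norm_num
  ring

lemma agd_lyapunov_step {μ lam α β₁ β₂ ρ : ℝ} {P : Matrix (Fin 2) (Fin 2) ℝ}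
    (hLMI : (agdLMI μ lam α β₁ β₂ P ρ).PosSemidef) {xs : E} {z y g : ℕ → E}
    (hy : ∀ k, y k = (1 + β₂) • z (k + 1) - β₂ • z k)
    (hz : ∀ k, z (k + 2) = (1 + β₁) • z (k + 1) - β₁ • z k - α • g k) {k : ℕ}
    (hRC : ⟪g k, y k - xs⟫_ℝ ≥ μ / 2 * ‖g k‖ ^ 2 + lam / 2 * ‖y k - xs‖ ^ 2) :
    kronQuadForm ![z (k + 2) - xs, z (k + 1) - xs] P ≤
      ρ ^ 2 * kronQuadForm ![z (k + 1) - xs, z k - xs] P := by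
  have hdev : y k - xs = (1 + β₂) • (z (k + 1) - xs) - β₂ • (z k - xs) := by
    rw [hy k]; module
  have hnext : z (k + 2) - xs = (1 + β₁) • (z (k + 1) - xs) - β₁ • (z k - xs) - α • g k := by
    rw [hz k]; module
  have h := kronQuadForm_nonneg hLMI (Sum.elim ![z (k + 1) - xs, z k - xs] ![g k])
  rw [kronQuadForm_agdLMI, ← hnext, ← hdev] at h
  linarith

end AGD

theorem agd_iterates_stay_in_RC_region {n : ℕ}
    (f : EuclideanSpace ℝ (Fin n) → ℝ)
    (μ lam ε : ℝ) (hε : 0 < ε)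
    (xs : EuclideanSpace ℝ (Fin n))
    (hRC : ∀ z : EuclideanSpace ℝ (Fin n), ‖z - xs‖ ≤ ε * ‖xs‖ →
      ⟪gradient f z, z - xs⟫_ℝ ≥ μ / 2 * ‖gradient f z‖ ^ 2 + lam / 2 * ‖z - xs‖ ^ 2)
    (α β₁ β₂ : ℝ)
    (hβ₂ : β₂ ∈ Set.Ico (0 : ℝ) 1)
    (z y : ℕ → EuclideanSpace ℝ (Fin n))
    (hy : ∀ k, y k = (1 + β₂) • z (k + 1) - β₂ • z k)
    (hz : ∀ k, z (k + 2) = (1 + β₁) • z (k + 1) - β₁ • z k - α • gradient f (y k))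
    (P : Matrix (Fin 2) (Fin 2) ℝ) (hP : P.IsHermitian) (hPpos : P.PosDef)
    (ρ : ℝ) (hρ : ρ ∈ Set.Ioo (0 : ℝ) 1)
    (hLMI : (-(fromBlocks
        ((!![1 + β₁, -β₁; 1, 0])ᵀ * P * !![1 + β₁, -β₁; 1, 0] - ρ ^ 2 • P)
        ((!![1 + β₁, -β₁; 1, 0])ᵀ * P * !![-α; 0])
        ((!![-α; 0])ᵀ * P * !![1 + β₁, -β₁; 1, 0])
        ((!![-α; 0])ᵀ * P * !![-α; 0]) +
      (fromBlocks !![1 + β₂, -β₂] (0 : Matrix (Fin 1) (Fin 1) ℝ) 0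
        (1 : Matrix (Fin 1) (Fin 1) ℝ))ᵀ *
      (fromBlocks (-lam • (1 : Matrix (Fin 1) (Fin 1) ℝ)) (1 : Matrix (Fin 1) (Fin 1) ℝ)
        (1 : Matrix (Fin 1) (Fin 1) ℝ) (-μ • (1 : Matrix (Fin 1) (Fin 1) ℝ))) *
      (fromBlocks !![1 + β₂, -β₂] (0 : Matrix (Fin 1) (Fin 1) ℝ) 0
        (1 : Matrix (Fin 1) (Fin 1) ℝ)))).PosSemidef)
    (hinit0 : ‖z 0 - xs‖ ≤
      ε / Real.sqrt (10 * ((⨆ i, hP.eigenvalues i) / (⨅ i, hP.eigenvalues i))) * ‖xs‖)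
    (hinit1 : ‖z 1 - xs‖ ≤
      ε / Real.sqrt (10 * ((⨆ i, hP.eigenvalues i) / (⨅ i, hP.eigenvalues i))) * ‖xs‖) :
    ∀ k, ‖y k - xs‖ ≤ ε * ‖xs‖ := by
  set cmin := ⨅ i, hP.eigenvalues i
  set cmax := ⨆ i, hP.eigenvalues i
  have hcmin : 0 < cmin := hPpos.iInf_eigenvalues_pos
  have hcmax : 0 < cmax := hcmin.trans_le <|
    ciInf_le_ciSup (Set.finite_range _).bddBelow (Set.finite_range _).bddAbove
  set R := ε * ‖xs‖
  set V : ℕ → ℝ := fun k => kronQuadForm ![z (k + 1) - xs, z k - xs] P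
  have hinside (k) (hk : V k ≤ cmin * R ^ 2 / 5) : ‖y k - xs‖ ≤ R := by
    have hdev : y k - xs = (1 + β₂) • (z (k + 1) - xs) - β₂ • (z k - xs) := by
      rw [hy k]; module
    exact hdev ▸ norm_momentum_le_of_kronQuadForm_le hcmin hP.iInf_eigenvalues_smul_one_le
      (by positivity) ⟨hβ₂.1, hβ₂.2.le⟩ hk
  have hV0 : V 0 ≤ cmin * R ^ 2 / 5 :=
    kronQuadForm_le_of_norm_le hcmin hcmax hP.le_iSup_eigenvalues_smul_one hinit1 hinit0
  have hdecrease (k) (hk : ‖y k - xs‖ ≤ R) : V (k + 1) ≤ V k :=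
    (agd_lyapunov_step (g := fun k => gradient f (y k)) hLMI hy hz (hRC _ hk)).trans <|
      mul_le_of_le_one_left (kronQuadForm_nonneg hPpos.posSemidef _) (pow_le_one₀ hρ.1.le hρ.2.le)
  have hV := le_apply_zero_of_guarded_step (fun k hk => hinside k (hk.trans hV0)) hdecrease
  exact fun k => hinside k ((hV k).trans hV0)
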